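/- Let p be an odd prime, p₂ := (p−1)/2, and let x : ℤ → 𝔽_p be the doubly infinite sequence with x(p+k) = C(p₂, k/2) for 0 ≤ k ≤ p−1 (where C(p₂, k/2) is the binomial coefficient (p₂ choose k/2) reduced mod p when k is even, and 0 when k is odd), and x(i) = 0 for all other i ∈ ℤ. Then for all natural numbers 0 ≤ j ≤ p₂ and 0 ≤ i ≤ p₂, one has, in 𝔽_p: W(x)[2j, p+2i] = C(p₂+j, i+j) · ∏_{k=0}^{j−1} C(p₂+k, i+k)² · ((k+1)·(p₂+k−i+1)^{−1})^{2(j−k)−1}, where the binomial coefficients are reduced mod p, the product is taken in 𝔽_p, and (p₂+k−i+1)^{−1} denotes the inverse in 𝔽_p (these elements are nonzero mod p). -/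

import Mathlib

/-!
The entries of `x` at odd distance from `p` vanish, so sorting the rows and columns of the
Toeplitz matrix of size `2j + 1` by parity makes it block diagonal, with blocks the Toeplitz
matrices `(C(m, i + a - b))_{a,b<n}` of sizes `n = j + 1` and `n = j`, where `m = (p - 1) / 2`.

By Vandermonde's identity a unitriangular column operation turns `(C(m, i + a - b))` into
`(C(M - b, i + a - b))` with `M = m + n - 1`, and
`C(M, k) * C(k, b) = C(M, b) * C(M - b, k - b)` factors this as
`diag (C(M, i + a)) * (C(i + a, b)) * diag (C(M, b))⁻¹`,
where the middle matrix has determinant `1` by Pascal's rule. So the determinant is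
`∏_a C(M, i + a) / ∏_b C(M, b)`, which regroups into
`∏_{t<n} C(m + t, i + t) * ∏_{k<t} (k + 1) / (m - i + k + 1)`.
All factorials involved are at most `(p - 1)!`, hence units mod `p`.
-/

open Finset Matrix Nat

namespace CantorNumberWall

def intChoose (n : ℕ) (c : ℤ) : ℕ := if 0 ≤ c then n.choose c.toNat else 0

lemma intChoose_of_neg {n : ℕ} {c : ℤ} (hc : c < 0) : intChoose n c = 0 := by
  simp [intChoose, not_le.mpr hc]

@[simp] lemma intChoose_natCast (n k : ℕ) : intChoose n k = n.choose k := by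
  simp [intChoose]

/-- Vandermonde's identity. -/
lemma intChoose_add (m s : ℕ) (c : ℤ) :
    intChoose (m + s) c = ∑ k ∈ range (s + 1), s.choose k * intChoose m (c - k) := by
  rcases lt_or_ge c 0 with hc | hc
  · rw [intChoose_of_neg hc]
    exact (sum_eq_zero fun k _ => by rw [intChoose_of_neg (by omega), mul_zero]).symm
  lift c to ℕ using hc
  have hsum : ∑ k ∈ range (c + 1), s.choose k * intChoose m (c - k)
      = ∑ k ∈ range (s + 1), s.choose k * intChoose m (c - k) := by
    rw [← eventually_constant_sum (N := c + 1) (n := c + s + 1) _ (by omega),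
      eventually_constant_sum (N := s + 1) _ (by omega)]
    · intro k hk
      rw [Nat.choose_eq_zero_of_lt (by omega), zero_mul]
    · intro k hk
      rw [intChoose_of_neg (by omega), mul_zero]
  rw [← hsum, intChoose_natCast, add_comm, Nat.add_choose_eq,
    Nat.sum_antidiagonal_eq_sum_range_succ_mk]
  refine sum_congr rfl fun k hk => ?_
  rw [← Nat.cast_sub (by simpa [Nat.lt_succ_iff] using hk), intChoose_natCast]

/-- `T_s(n; m)` of the paper is `toeplitz (fun c => s (c + n)) (m + 1)`. -/
def toeplitz {R : Type*} (f : ℤ → R) (n : ℕ) : Matrix (Fin n) (Fin n) R :=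
  of fun a b => f ((a : ℕ) - (b : ℕ))

def finEvenOddEquiv (j : ℕ) : Fin (j + 1) ⊕ Fin j ≃ Fin (2 * j + 1) where
  toFun := Sum.elim (fun a => ⟨2 * a, by omega⟩) (fun a => ⟨2 * a + 1, by omega⟩)
  invFun k :=
    if h : (k : ℕ) % 2 = 0 then .inl ⟨k / 2, by omega⟩ else .inr ⟨k / 2, by omega⟩
  left_inv := by
    rintro (a | a)
    · simp
    · simp [Nat.add_mod, Fin.ext_iff]; omega
  right_inv k := by
    by_cases h : (k : ℕ) % 2 = 0
    · simp [h, Fin.ext_iff]; omega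
    · simp [h, Fin.ext_iff]; omega

theorem det_toeplitz_of_odd_eq_zero {R : Type*} [CommRing R] {f : ℤ → R}
    (hf : ∀ c, f (2 * c + 1) = 0) (j : ℕ) :
    (toeplitz f (2 * j + 1)).det =
      (toeplitz (fun c => f (2 * c)) (j + 1)).det * (toeplitz (fun c => f (2 * c)) j).det := by
  rw [← det_submatrix_equiv_self (finEvenOddEquiv j), ← det_fromBlocks_zero₂₁ _ 0]
  congr 1
  ext (a | a) (b | b) <;> simp only [toeplitz, finEvenOddEquiv, submatrix_apply, of_apply,
    Equiv.coe_fn_mk, Sum.elim_inl, Sum.elim_inr, fromBlocks_apply₁₁, fromBlocks_apply₁₂,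
    fromBlocks_apply₂₁, fromBlocks_apply₂₂, Matrix.zero_apply]
  · congr 1; push_cast; ring
  · convert hf ((a : ℕ) - (b : ℕ) - 1) using 2; push_cast; ring
  · convert hf ((a : ℕ) - (b : ℕ)) using 2; push_cast; ring
  · congr 1; push_cast; ring

section BinomialToeplitz

variable {R : Type*} [CommRing R]

lemma toeplitz_intChoose_mul_intChoose (m i n : ℕ) :
    toeplitz (fun c => (intChoose m (i + c) : R)) n *
        of (fun t b : Fin n => (intChoose (n - 1 - b) ((t : ℕ) - (b : ℕ)) : R)) =
      of fun a b : Fin n => (intChoose (m + (n - 1 - b)) (i + (a : ℕ) - (b : ℕ)) : R) := by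
  ext a b
  obtain ⟨s, hs⟩ : ∃ s, n - 1 - b = s := ⟨_, rfl⟩
  have hn : range n = range (b + (s + 1)) := by rw [← hs]; congr 1; omega
  simp only [toeplitz, mul_apply, of_apply, hs]
  rw [Fin.sum_univ_eq_sum_range
    (fun t => (intChoose m (i + ((a : ℕ) - (t : ℤ))) * intChoose s ((t : ℤ) - b) : R)), hn,
    sum_range_add,
    sum_eq_zero fun t ht => by
      rw [intChoose_of_neg (n := s) (by simp at ht; omega), Nat.cast_zero, mul_zero],
    zero_add, intChoose_add]
  push_cast
  refine sum_congr rfl fun k _ => ?_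
  rw [add_sub_cancel_left, intChoose_natCast, mul_comm]
  congr 3
  ring

lemma det_intChoose_sub_eq_one (n : ℕ) :
    (of fun t b : Fin n => (intChoose (n - 1 - b) ((t : ℕ) - (b : ℕ)) : R)).det = 1 := by
  rw [det_of_isLowerTriangular]
  · simp [intChoose]
  · intro t b hbt
    simp only [of_apply]
    rw [intChoose_of_neg (by simp at hbt; omega), Nat.cast_zero]

lemma choose_mul_choose_eq_mul_intChoose (M k b : ℕ) :
    M.choose k * k.choose b = M.choose b * intChoose (M - b) ((k : ℤ) - b) := by
  rcases le_or_gt b k with hbk | hkb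
  · rw [Nat.choose_mul hbk, ← Nat.cast_sub hbk, intChoose_natCast]
  · rw [Nat.choose_eq_zero_of_lt hkb, intChoose_of_neg (by omega), mul_zero, mul_zero]

lemma det_choose_add_eq_one (i n : ℕ) :
    (of fun a b : Fin n => ((i + a : ℕ).choose b : R)).det = 1 := by
  induction n with
  | zero => simp
  | succ n ih =>
    -- subtracting from each row the one above it, Pascal's rule leaves `(1, 0, …, 0)` as first
    -- column and the same matrix of size `n` as the complementary minor
    let B : Matrix (Fin (n + 1)) (Fin (n + 1)) R := of fun a b =>
      Fin.cases (i.choose b) (fun a' => Fin.cases 0 (fun b' => ((i + a' : ℕ).choose b' : R)) b) a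
    rw [det_eq_of_forall_row_eq_smul_add_pred (B := B) 1]
    · have hminor :
          B.submatrix Fin.succ Fin.succ = of fun a b : Fin n => ((i + a : ℕ).choose b : R) := by
        ext a b
        simp [B]
      rw [det_succ_column_zero, Fin.sum_univ_succ, sum_eq_zero fun a _ => by simp [B],
        Fin.succAbove_zero, hminor, ih]
      simp [B]
    · simp [B]
    · intro a b
      cases b using Fin.cases <;> simp [B, ← add_assoc, Nat.choose_succ_succ]

theorem det_toeplitz_intChoose_mul_prod_choose (m i n : ℕ) :
    (toeplitz (fun c => (intChoose m (i + c) : R)) n).det *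
        ∏ b ∈ range n, ((m + n - 1).choose b : R) =
      ∏ a ∈ range n, ((m + n - 1).choose (i + a) : R) := by
  have hfactor : diagonal (fun a : Fin n => ((m + n - 1).choose (i + a) : R)) *
        of (fun a b : Fin n => ((i + a : ℕ).choose b : R)) =
      (of fun a b : Fin n => (intChoose (m + (n - 1 - b)) (i + (a : ℕ) - (b : ℕ)) : R)) *
        diagonal (fun b : Fin n => ((m + n - 1).choose b : R)) := by
    ext a b
    simp only [diagonal_mul, mul_diagonal, of_apply]
    rw [show m + (n - 1 - b) = m + n - 1 - b by omega, mul_comm (intChoose _ _ : R)]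
    exact_mod_cast congrArg (Nat.cast : ℕ → R)
      (choose_mul_choose_eq_mul_intChoose (m + n - 1) (i + a) b)
  calc _ = (toeplitz (fun c => (intChoose m (i + c) : R)) n *
          of (fun t b : Fin n => (intChoose (n - 1 - b) ((t : ℕ) - (b : ℕ)) : R))).det *
        (diagonal (fun b : Fin n => ((m + n - 1).choose b : R))).det := by
        rw [det_mul, det_intChoose_sub_eq_one, mul_one, det_diagonal,
          Fin.prod_univ_eq_prod_range (fun b => ((m + n - 1).choose b : R))]
    _ = _ := by
      rw [toeplitz_intChoose_mul_intChoose, ← det_mul, ← hfactor, det_mul,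
        det_choose_add_eq_one, mul_one, det_diagonal,
        Fin.prod_univ_eq_prod_range (fun a => ((m + n - 1).choose (i + a) : R))]

end BinomialToeplitz

section Field

variable {K : Type*} [Field K]

lemma natCast_factorial_ne_zero_of_le {N k : ℕ} (hN : (N ! : K) ≠ 0) (hk : k ≤ N) :
    (k ! : K) ≠ 0 := by
  obtain ⟨c, hc⟩ := factorial_dvd_factorial hk
  rintro h
  exact hN (by rw [hc, cast_mul, h, zero_mul])

lemma natCast_choose_mul_factorial_mul_factorial {N k : ℕ} (hk : k ≤ N) :
    (N.choose k : K) * k ! * (N - k)! = N ! := by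
  exact_mod_cast congrArg (Nat.cast : ℕ → K) (choose_mul_factorial_mul_factorial hk)

lemma natCast_choose_eq_div {N k : ℕ} (hN : (N ! : K) ≠ 0) (hk : k ≤ N) :
    (N.choose k : K) = N ! / (k ! * (N - k)!) := by
  rw [eq_div_iff (mul_ne_zero (natCast_factorial_ne_zero_of_le hN hk)
    (natCast_factorial_ne_zero_of_le hN (sub_le N k))), ← mul_assoc,
    natCast_choose_mul_factorial_mul_factorial hk]

lemma natCast_choose_ne_zero {N k : ℕ} (hN : (N ! : K) ≠ 0) (hk : k ≤ N) :
    (N.choose k : K) ≠ 0 := by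
  rintro h
  exact hN (by rw [← natCast_choose_mul_factorial_mul_factorial hk, h, zero_mul, zero_mul])

lemma prod_range_succ_mul_inv_succ_add {d t : ℕ} (h : ((d + t)! : K) ≠ 0) :
    ∏ k ∈ range t, ((k + 1 : ℕ) : K) * ((d + k + 1 : ℕ) : K)⁻¹ =
      t ! * d ! / (d + t)! := by
  have hasc : (d ! : K) * ∏ k ∈ range t, ((d + k + 1 : ℕ) : K) = (d + t)! := by
    rw [← factorial_mul_ascFactorial, ascFactorial_eq_prod_range]
    push_cast
    congr 1
    exact prod_congr rfl fun k _ => by ring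
  rw [prod_mul_distrib, prod_inv_distrib, ← cast_prod, prod_range_add_one_eq_factorial,
    eq_div_iff h, ← hasc]
  have : ∏ k ∈ range t, ((d + k + 1 : ℕ) : K) ≠ 0 := by
    intro h0
    exact h (by rw [← hasc, h0, mul_zero])
  field_simp

theorem prod_range_choose_add_eq {m i : ℕ} (him : i ≤ m) (n : ℕ) (hK : ((m + n)! : K) ≠ 0) :
    ∏ a ∈ range (n + 1), ((m + n).choose (i + a) : K) =
      (∏ b ∈ range (n + 1), ((m + n).choose b : K)) *
        ∏ t ∈ range (n + 1), ((m + t).choose (i + t) : K) *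
          ∏ k ∈ range t, ((k + 1 : ℕ) : K) * ((m + k - i + 1 : ℕ) : K)⁻¹ := by
  obtain ⟨d, rfl⟩ := exists_add_of_le him
  have hfact : ∀ k ≤ i + d + n, (k ! : K) ≠ 0 := fun k => natCast_factorial_ne_zero_of_le hK
  set u : ℕ → K := fun t => t ! / (i + t)!
  set v : ℕ → K := fun t => (i + d + t)! / (d + t)!
  have hterm : ∀ a ≤ n, ((i + d + n).choose (i + a) : K) =
      (i + d + n).choose a * (u a * v (n - a)) := by
    intro a ha
    rw [natCast_choose_eq_div hK (by omega), natCast_choose_eq_div hK (by omega),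
      show i + d + n - (i + a) = d + (n - a) by omega,
      show i + d + n - a = i + d + (n - a) by omega]
    have := hfact (d + (n - a)) (by omega)
    have := hfact (i + d + (n - a)) (by omega)
    have := hfact (i + a) (by omega)
    have := hfact a (by omega)
    simp only [u, v]
    field_simp
  have hcoeff : ∀ t ≤ n, ((i + d + t).choose (i + t) : K) *
      ∏ k ∈ range t, ((k + 1 : ℕ) : K) * ((i + d + k - i + 1 : ℕ) : K)⁻¹ =
        u t * v t := by
    intro t ht
    simp_rw [show ∀ k, i + d + k - i + 1 = d + k + 1 by omega]
    rw [prod_range_succ_mul_inv_succ_add (hfact _ (by omega)),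
      natCast_choose_eq_div (hfact _ (by omega)) (by omega),
      show i + d + t - (i + t) = d by omega]
    have := hfact d (by omega)
    have := hfact (i + t) (by omega)
    have := hfact (d + t) (by omega)
    simp only [u, v]
    field_simp
  calc ∏ a ∈ range (n + 1), ((i + d + n).choose (i + a) : K)
      = ∏ a ∈ range (n + 1), ((i + d + n).choose a : K) * (u a * v (n - a)) :=
        prod_congr rfl fun a ha => hterm a (by simpa [Nat.lt_succ_iff] using ha)
    _ = (∏ a ∈ range (n + 1), ((i + d + n).choose a : K)) *
          ((∏ t ∈ range (n + 1), u t) * ∏ t ∈ range (n + 1), v t) := by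
        rw [prod_mul_distrib, prod_mul_distrib, ← prod_range_reflect v (n + 1)]
        simp
    _ = _ := by
        rw [← prod_mul_distrib]
        congr 1
        exact (prod_congr rfl fun t ht => hcoeff t (by simpa [Nat.lt_succ_iff] using ht)).symm

theorem det_toeplitz_intChoose {m i : ℕ} (him : i ≤ m) {n : ℕ}
    (hK : ((m + n - 1)! : K) ≠ 0) :
    (toeplitz (fun c => (intChoose m (i + c) : K)) n).det =
      ∏ t ∈ range n, ((m + t).choose (i + t) : K) *
        ∏ k ∈ range t, ((k + 1 : ℕ) : K) * ((m + k - i + 1 : ℕ) : K)⁻¹ := by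
  cases n with
  | zero => simp
  | succ n =>
    rw [← add_assoc, add_tsub_cancel_right] at hK
    have hdet := det_toeplitz_intChoose_mul_prod_choose (R := K) m i (n + 1)
    rw [← add_assoc, add_tsub_cancel_right, prod_range_choose_add_eq him n hK, mul_comm] at hdet
    refine mul_left_cancel₀ (prod_ne_zero_iff.mpr fun b hb => ?_) hdet
    exact natCast_choose_ne_zero hK (by simp at hb; omega)

end Field

section Monoid

variable {M : Type*} [CommMonoid M]

lemma prod_range_prod_range_eq_prod_pow (r : ℕ → M) (j : ℕ) :
    ∏ t ∈ range j, ∏ k ∈ range t, r k = ∏ k ∈ range j, r k ^ (j - 1 - k) := by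
  induction j with
  | zero => simp
  | succ j ih =>
    rw [prod_range_succ, ih, prod_range_succ _ j, Nat.add_sub_cancel, Nat.sub_self, pow_zero,
      mul_one, ← prod_mul_distrib]
    refine prod_congr rfl fun k hk => ?_
    rw [← pow_succ]
    congr 1
    simp at hk
    omega

lemma prod_range_succ_mul_prod_range (c r : ℕ → M) (j : ℕ) :
    (∏ t ∈ range (j + 1), c t * ∏ k ∈ range t, r k) *
        ∏ t ∈ range j, c t * ∏ k ∈ range t, r k =
      c j * ∏ k ∈ range j, c k ^ 2 * r k ^ (2 * (j - k) - 1) := by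
  have hpow : ∏ k ∈ range j, r k ^ (2 * (j - k) - 1) =
      (∏ k ∈ range j, r k ^ (j - 1 - k)) ^ 2 * ∏ k ∈ range j, r k := by
    rw [← prod_pow, ← prod_mul_distrib]
    refine prod_congr rfl fun k hk => ?_
    rw [← pow_mul, ← pow_succ]
    congr 1
    simp at hk
    omega
  rw [prod_range_succ, prod_mul_distrib, prod_mul_distrib, prod_pow, hpow,
    prod_range_prod_range_eq_prod_pow]
  simp only [sq, mul_comm, mul_assoc, mul_left_comm]

end Monoid

def paddedCantor (p : ℕ) (i : ℤ) : ZMod p :=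
  if (p : ℤ) ≤ i ∧ i < 2 * (p : ℤ) then
    (if (i - (p : ℤ)).toNat % 2 = 0 then
      ((((p - 1) / 2).choose ((i - (p : ℤ)).toNat / 2) : ℕ) : ZMod p)
    else 0)
  else 0

lemma paddedCantor_add_two_mul {p : ℕ} (hp : 0 < p) (c : ℤ) :
    paddedCantor p (p + 2 * c) = intChoose ((p - 1) / 2) c := by
  rcases lt_or_ge c 0 with hc | hc
  · rw [paddedCantor, if_neg (by omega), intChoose_of_neg hc, Nat.cast_zero]
  lift c to ℕ using hc
  rw [paddedCantor, add_sub_cancel_left, intChoose_natCast]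
  by_cases hcp : 2 * c < p
  · rw [if_pos (by omega), if_pos (by omega)]
    congr
    omega
  · rw [if_neg (by omega), choose_eq_zero_of_lt (by omega), Nat.cast_zero]

lemma paddedCantor_add_two_mul_add_one (p : ℕ) (c : ℤ) :
    paddedCantor p (p + 2 * c + 1) = 0 := by
  unfold paddedCantor
  split_ifs <;> first | rfl | omega

end CantorNumberWall

open CantorNumberWall

theorem base_case_c_general (p : ℕ) (hp : p.Prime)
    (x : ℤ → ZMod p)
    (hx : ∀ i : ℤ, x i =
      if (p : ℤ) ≤ i ∧ i < 2 * (p : ℤ) then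
        (if (i - (p : ℤ)).toNat % 2 = 0 then
          ((((p - 1) / 2).choose ((i - (p : ℤ)).toNat / 2) : ℕ) : ZMod p)
        else 0)
      else 0) :
    ∀ j i : ℕ, j ≤ (p - 1) / 2 → i ≤ (p - 1) / 2 →
      Matrix.det (Matrix.of fun a b : Fin (2 * j + 1) =>
          x (((a : ℕ) : ℤ) - ((b : ℕ) : ℤ) + ((p : ℤ) + 2 * (i : ℤ))))
        = ((((p - 1) / 2 + j).choose (i + j) : ℕ) : ZMod p) *
            ∏ k ∈ Finset.range j,
              ((((p - 1) / 2 + k).choose (i + k) : ℕ) : ZMod p) ^ 2 *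
                (((k + 1 : ℕ) : ZMod p) *
                    ((((p - 1) / 2 + k - i + 1 : ℕ) : ZMod p))⁻¹) ^ (2 * (j - k) - 1) := by
  intro j i hj hi
  have : Fact p.Prime := ⟨hp⟩
  obtain rfl : x = paddedCantor p := funext hx
  have hfact : ∀ k ≤ (p - 1) / 2 + j, ((k ! : ℕ) : ZMod p) ≠ 0 := by
    intro k hk
    rw [Ne, ZMod.natCast_eq_zero_iff, hp.dvd_factorial]
    have := hp.two_le
    omega
  have hodd_zero (c : ℤ) : paddedCantor p (2 * c + 1 + (p + 2 * i)) = 0 := by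
    rw [← paddedCantor_add_two_mul_add_one p (i + c)]
    ring_nf
  have heven : (fun c : ℤ => paddedCantor p (2 * c + (p + 2 * i))) =
      fun c => (intChoose ((p - 1) / 2) (i + c) : ZMod p) := by
    ext c
    rw [← paddedCantor_add_two_mul hp.pos]
    ring_nf
  change (toeplitz (fun c => paddedCantor p (c + (p + 2 * i))) (2 * j + 1)).det = _
  rw [det_toeplitz_of_odd_eq_zero hodd_zero, heven,
    det_toeplitz_intChoose hi (hfact _ (by omega)), det_toeplitz_intChoose hi (hfact _ (by omega))]
  exact prod_range_succ_mul_prod_range _ _ j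

/-- explicit formula for the even-row entries c_{i,j} of the
number wall of the first p entries of the p-Cantor sequence padded with
p zeroes on each side. -/
theorem base_case_c (p : ℕ) (hp : p.Prime) (hodd : Odd p)
    (x : ℤ → ZMod p)
    (hx : ∀ i : ℤ, x i =
      if (p : ℤ) ≤ i ∧ i < 2 * (p : ℤ) then
        (if (i - (p : ℤ)).toNat % 2 = 0 then
          ((((p - 1) / 2).choose ((i - (p : ℤ)).toNat / 2) : ℕ) : ZMod p)
        else 0)
      else 0) :
    ∀ j i : ℕ, j ≤ (p - 1) / 2 → i ≤ (p - 1) / 2 →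
      Matrix.det (Matrix.of fun a b : Fin (2 * j + 1) =>
          x (((a : ℕ) : ℤ) - ((b : ℕ) : ℤ) + ((p : ℤ) + 2 * (i : ℤ))))
        = ((((p - 1) / 2 + j).choose (i + j) : ℕ) : ZMod p) *
            ∏ k ∈ Finset.range j,
              ((((p - 1) / 2 + k).choose (i + k) : ℕ) : ZMod p) ^ 2 *
                (((k + 1 : ℕ) : ZMod p) *
                    ((((p - 1) / 2 + k - i + 1 : ℕ) : ZMod p))⁻¹) ^ (2 * (j - k) - 1) :=
  base_case_c_general p hp x hx
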